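/- arXiv:1901.10689 — 6 statements merged into one kernel-verified Lean document; each statement's English description precedes it below -/
import Mathlib

section
/- If W : [0,∞) → [0,∞) is nondecreasing and the functions W_n are defined recursively by W_0(x) = 1 and W_{n+1}(x) = ∫_x^∞ (W(z−x)/R(z)) W_n(z) dz for a positive continuous function R on (0,∞), and W_1(x) < ∞ for all x ≥ 0, then each W_n is nonincreasing in x and W_n(x) ≤ W_1(x)^n for all n ≥ 0 and x ≥ 0. -/
open MeasureTheory Set Filter

theorem stmt0 (W R : ℝ → ℝ) (Wseq : ℕ → ℝ → ℝ)
    (hW0 : ∀ x, 0 ≤ x → 0 ≤ W x) (hWmono : MonotoneOn W (Ici 0))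
    (hRcont : ContinuousOn R (Ioi 0)) (hRpos : ∀ x, 0 < x → 0 < R x)
    (h0 : ∀ x, Wseq 0 x = 1)
    (hrec : ∀ n x, 0 ≤ x → Wseq (n + 1) x = ∫ z in Ioi x, W (z - x) * Wseq n z / R z)
    (hint : ∀ n x, 0 ≤ x → IntegrableOn (fun z => W (z - x) * Wseq n z / R z) (Ioi x)) :
    ∀ n : ℕ, AntitoneOn (Wseq n) (Ici 0) ∧ ∀ x, 0 ≤ x → Wseq n x ≤ (Wseq 1 x) ^ n := by
  have hnn : ∀ n, ∀ x, 0 ≤ x → 0 ≤ Wseq n x := by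
    intro n
    induction n with
    | zero => intro x hx; rw [h0]; norm_num
    | succ n ih =>
      intro x hx
      rw [hrec n x hx]
      apply setIntegral_nonneg measurableSet_Ioi
      intro z hz
      have hz' : x < z := hz
      have hz0 : (0:ℝ) ≤ z := hx.trans hz'.le
      have hw : 0 ≤ W (z - x) := hW0 _ (by linarith)
      exact div_nonneg (mul_nonneg hw (ih z hz0)) (hRpos z (lt_of_le_of_lt hx hz')).le
  have hanti : ∀ n, AntitoneOn (Wseq n) (Ici 0) := by
    intro n
    induction n with
    | zero => intro x hx y hy hxy; simp [h0]
    | succ n ih =>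
      intro x hx y hy hxy
      have hx' : (0:ℝ) ≤ x := hx
      have hy' : (0:ℝ) ≤ y := hy
      rw [hrec n x hx', hrec n y hy']
      have h1 : ∫ z in Ioi y, W (z - y) * Wseq n z / R z
          ≤ ∫ z in Ioi y, W (z - x) * Wseq n z / R z := by
        apply setIntegral_mono_on (hint n y hy')
          ((hint n x hx').mono_set (Ioi_subset_Ioi hxy)) measurableSet_Ioi
        intro z hz
        have hz' : y < z := hz
        have hz0 : (0:ℝ) ≤ z := hy'.trans hz'.le
        have hRz := hRpos z (lt_of_le_of_lt hy' hz')
        have hWle : W (z - y) ≤ W (z - x) :=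
          hWmono (mem_Ici.mpr (by linarith)) (mem_Ici.mpr (by linarith)) (by linarith)
        have hWn : 0 ≤ Wseq n z := hnn n z hz0
        gcongr
      have h2 : ∫ z in Ioi y, W (z - x) * Wseq n z / R z
          ≤ ∫ z in Ioi x, W (z - x) * Wseq n z / R z := by
        apply setIntegral_mono_set (hint n x hx')
        · filter_upwards [ae_restrict_mem measurableSet_Ioi] with z hz
          have hz' : x < z := hz
          have hz0 : (0:ℝ) ≤ z := hx'.trans hz'.le
          exact div_nonneg (mul_nonneg (hW0 _ (by linarith)) (hnn n z hz0))
            (hRpos z (lt_of_le_of_lt hx' hz')).le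
        · exact (Ioi_subset_Ioi hxy).eventuallyLE
      linarith
  have hb : ∀ n, ∀ x, 0 ≤ x → Wseq n x ≤ (Wseq 1 x) ^ n := by
    intro n
    induction n with
    | zero => intro x hx; simp [h0]
    | succ n ih =>
      intro x hx
      have hW1 : Wseq 1 x = ∫ z in Ioi x, W (z - x) / R z := by
        rw [hrec 0 x hx]
        congr 1; ext z; rw [h0, mul_one]
      have hi0 : IntegrableOn (fun z => W (z - x) / R z) (Ioi x) := by
        have := hint 0 x hx
        simpa [h0] using this
      rw [hrec n x hx]
      have step : ∫ z in Ioi x, W (z - x) * Wseq n z / R z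
          ≤ ∫ z in Ioi x, (Wseq 1 x) ^ n * (W (z - x) / R z) := by
        apply setIntegral_mono_on (hint n x hx) (hi0.const_mul _) measurableSet_Ioi
        intro z hz
        have hz' : x < z := hz
        have hz0 : (0:ℝ) ≤ z := hx.trans hz'.le
        have hRz := hRpos z (lt_of_le_of_lt hx hz')
        have hWz : 0 ≤ W (z - x) := hW0 _ (by linarith)
        have h1 : Wseq n z ≤ (Wseq 1 z) ^ n := ih z hz0
        have h2 : Wseq 1 z ≤ Wseq 1 x :=
          hanti 1 (mem_Ici.mpr hx) (mem_Ici.mpr hz0) hz'.le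
        have h3 : (Wseq 1 z) ^ n ≤ (Wseq 1 x) ^ n :=
          pow_le_pow_left₀ (hnn 1 z hz0) h2 n
        calc W (z - x) * Wseq n z / R z ≤ W (z - x) * (Wseq 1 x) ^ n / R z := by
              gcongr
              exact h1.trans h3
          _ = (Wseq 1 x) ^ n * (W (z - x) / R z) := by ring
      calc ∫ z in Ioi x, W (z - x) * Wseq n z / R z
          ≤ ∫ z in Ioi x, (Wseq 1 x) ^ n * (W (z - x) / R z) := step
        _ = (Wseq 1 x) ^ n * ∫ z in Ioi x, W (z - x) / R z := integral_const_mul _ _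
        _ = (Wseq 1 x) ^ (n + 1) := by rw [← hW1, pow_succ]
  exact fun n => ⟨hanti n, hb n⟩
end

section
/- Let Ψ : [0,∞) → [0,∞) with Ψ(q) > 0 for q > 0, and let W : [0,∞) → [0,∞) be a continuous increasing function satisfying ∫_0^∞ e^{−qy} W(y) dy = 1/Ψ(q) for all q > 0. If R(x) = e^{θx} for some θ > 0, and W_n is defined by W_0 = 1, W_{n+1}(x) = ∫_x^∞ W(z−x) W_n(z)/R(z) dz, then W_n(x) = e^{−nθx} / ∏_{j=1}^n Ψ(jθ) for all n ≥ 1 and x ≥ 0. -/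
/-!
After the substitution `y = z - x`, the recursion integral of `exp (-q z)` against the kernel
`W (z - x)` is `exp (-q x)` times the Laplace transform of `W` at `q`, i.e. `exp (-q x) / Ψ q`.
So if `W_n z = exp (-n θ z) / ∏_{j ≤ n} Ψ (j θ)`, then `W_{n+1} x` picks up the factor
`exp (-θ x) / Ψ ((n + 1) θ)`; the induction starts at `n = 0` with the empty product.
-/

open MeasureTheory Set

theorem setIntegral_Ioi_comp_sub_right {E : Type*} [NormedAddCommGroup E] [NormedSpace ℝ E]
    (f : ℝ → E) (x : ℝ) :
    ∫ z in Ioi x, f (z - x) = ∫ y in Ioi 0, f y := by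
  have := (measurePreserving_add_right volume x).setIntegral_preimage_emb
    (measurableEmbedding_addRight x) (fun z => f (z - x)) (Ioi x)
  simpa [preimage_add_const_Ioi] using this.symm

theorem setIntegral_Ioi_comp_sub_mul_exp (W : ℝ → ℝ) (q x : ℝ) :
    ∫ z in Ioi x, W (z - x) * Real.exp (-q * z) =
      Real.exp (-q * x) * ∫ y in Ioi 0, Real.exp (-q * y) * W y := by
  rw [← integral_const_mul, ← setIntegral_Ioi_comp_sub_right _ x]
  congr 1 with z
  rw [show -q * z = -q * x + -q * (z - x) by ring, Real.exp_add]
  ring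

theorem stmt2_general (θ : ℝ) (hθ : 0 < θ) (Ψ W : ℝ → ℝ) (Wseq : ℕ → ℝ → ℝ)
    (hLT : ∀ q, 0 < q → ∫ y in Ioi (0 : ℝ), Real.exp (-q * y) * W y = 1 / Ψ q)
    (h0 : ∀ x, Wseq 0 x = 1)
    (hrec : ∀ n x, 0 ≤ x →
      Wseq (n + 1) x = ∫ z in Ioi x, W (z - x) * Wseq n z * Real.exp (-θ * z)) :
    ∀ n : ℕ, 1 ≤ n → ∀ x : ℝ, 0 ≤ x →
      Wseq n x = Real.exp (-(n : ℝ) * θ * x) / ∏ j ∈ Finset.Icc 1 n, Ψ ((j : ℝ) * θ) := by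
  suffices key : ∀ n : ℕ, ∀ x : ℝ, 0 ≤ x →
      Wseq n x = Real.exp (-(n : ℝ) * θ * x) / ∏ j ∈ Finset.Icc 1 n, Ψ ((j : ℝ) * θ) from
    fun n _ => key n
  intro n
  induction n with
  | zero => simp [h0]
  | succ n ih =>
    intro x hx
    have hq : 0 < ((n : ℝ) + 1) * θ := by positivity
    rw [hrec n x hx, Finset.prod_Icc_succ_top (by omega), Nat.cast_succ, neg_mul _ θ]
    generalize ∏ j ∈ Finset.Icc 1 n, Ψ ((j : ℝ) * θ) = P at ih ⊢
    calc ∫ z in Ioi x, W (z - x) * Wseq n z * Real.exp (-θ * z)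
        = ∫ z in Ioi x, P⁻¹ * (W (z - x) * Real.exp (-(((n : ℝ) + 1) * θ) * z)) := by
          refine setIntegral_congr_fun measurableSet_Ioi fun z hz => ?_
          rw [ih z (hx.trans hz.out.le),
            show -(((n : ℝ) + 1) * θ) * z = -(n : ℝ) * θ * z + -θ * z by ring, Real.exp_add]
          ring
      _ = P⁻¹ * (Real.exp (-(((n : ℝ) + 1) * θ) * x) * (1 / Ψ (((n : ℝ) + 1) * θ))) := by
          rw [integral_const_mul, setIntegral_Ioi_comp_sub_mul_exp, hLT _ hq]
      _ = _ := by ring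

theorem stmt2 (θ : ℝ) (hθ : 0 < θ) (Ψ W : ℝ → ℝ) (Wseq : ℕ → ℝ → ℝ)
    (hΨpos : ∀ q, 0 < q → 0 < Ψ q)
    (hWcont : Continuous W) (hWmono : StrictMonoOn W (Ici 0))
    (hWneg : ∀ x, x < 0 → W x = 0) (hW0 : ∀ x, 0 ≤ W x)
    (hLT : ∀ q, 0 < q → ∫ y in Ioi (0 : ℝ), Real.exp (-q * y) * W y = 1 / Ψ q)
    (h0 : ∀ x, Wseq 0 x = 1)
    (hrec : ∀ n x, 0 ≤ x →
      Wseq (n + 1) x = ∫ z in Ioi x, W (z - x) * Wseq n z * Real.exp (-θ * z)) :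
    ∀ n : ℕ, 1 ≤ n → ∀ x : ℝ, 0 ≤ x →
      Wseq n x = Real.exp (-(n : ℝ) * θ * x) / ∏ j ∈ Finset.Icc 1 n, Ψ ((j : ℝ) * θ) :=
  stmt2_general θ hθ Ψ W Wseq hLT h0 hrec
end

section
/- Let γ > 0, let W : [0,∞) → [0,1/γ] be nondecreasing with W(y) → 1/γ as y → ∞, and let R : (0,∞) → (0,∞) be continuous with ∫^∞ dx/R(x) < ∞. Define m(b) = ∫_b^∞ W(x−b)/R(x) dx and φ(b) = (1/γ)∫_b^∞ dx/R(x). If limsup_{h→1+} liminf_{x→∞} φ(hx)/φ(x) = 1, then m(b)/φ(b) → 1 as b → ∞. -/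
open MeasureTheory Set Filter

/-!
Since `W ≤ 1/γ`, `m ≤ φ`. Conversely, for `h > 1` the part of the integral defining `m b` over
`x > h b`, where `W (x - b) ≥ W ((h - 1) b)`, gives `m b ≥ γ W ((h - 1) b) φ (h b)`. The factor
`γ W ((h - 1) b)` tends to `1`, and condition H1 provides `h` arbitrarily close to `1` for which
`φ (h b) / φ b` is eventually as close to `1` as we like.
-/

theorem MonotoneOn.monotone_of_eq_on_Iio {α β : Type*} [LinearOrder α] [Preorder β] {f : α → β}
    {a : α} {c : β} (hmono : MonotoneOn f (Ici a)) (hge : ∀ x, a ≤ x → c ≤ f x)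
    (hlt : ∀ x, x < a → f x = c) : Monotone f := by
  intro x y hxy
  rcases lt_or_ge x a with hx | hx
  · rw [hlt x hx]
    rcases lt_or_ge y a with hy | hy
    · rw [hlt y hy]
    · exact hge y hy
  · exact hmono hx (hx.trans hxy) hxy

theorem setIntegral_Ioi_pos {g : ℝ → ℝ} {b : ℝ} (hg : ∀ x, b < x → 0 < g x)
    (hint : IntegrableOn g (Ioi b)) : 0 < ∫ x in Ioi b, g x := by
  rw [setIntegral_pos_iff_support_of_nonneg_ae ?_ hint]
  · have hsupp : Ioi b ⊆ Function.support g ∩ Ioi b := fun x hx => ⟨(hg x hx).ne', hx⟩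
    exact (isOpen_Ioi.measure_pos volume nonempty_Ioi).trans_le (measure_mono hsupp)
  · exact (ae_restrict_iff' measurableSet_Ioi).2 (ae_of_all _ fun x hx => (hg x hx).le)

section Kernel

variable {W R : ℝ → ℝ} {M b : ℝ}

theorem integrableOn_comp_sub_div (hW : Measurable W) (hWM : ∀ y, ‖W y‖ ≤ M)
    (hR : IntegrableOn (fun x => 1 / R x) (Ioi b)) :
    IntegrableOn (fun x => W (x - b) / R x) (Ioi b) := by
  have hint := hR.bdd_mul (hW.comp (measurable_sub_const b)).aestronglyMeasurable
    (ae_of_all _ fun x => hWM _)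
  simp only [mul_one_div, Function.comp_apply] at hint
  exact hint

theorem setIntegral_comp_sub_div_le (hW : Measurable W) (hWM : ∀ y, ‖W y‖ ≤ M)
    (hR0 : ∀ x, b < x → 0 ≤ R x) (hR : IntegrableOn (fun x => 1 / R x) (Ioi b)) :
    ∫ x in Ioi b, W (x - b) / R x ≤ M * ∫ x in Ioi b, 1 / R x := by
  rw [← integral_const_mul]
  refine setIntegral_mono_on (integrableOn_comp_sub_div hW hWM hR) (hR.const_mul M)
    measurableSet_Ioi fun x hx => ?_
  rw [mul_one_div]
  exact div_le_div_of_nonneg_right ((le_abs_self _).trans (hWM _)) (hR0 x hx)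

theorem mul_setIntegral_le_setIntegral_comp_sub_div (hW : Monotone W) (hW0 : ∀ y, 0 ≤ W y)
    (hWM : ∀ y, ‖W y‖ ≤ M) (hR0 : ∀ x, b < x → 0 ≤ R x)
    (hR : IntegrableOn (fun x => 1 / R x) (Ioi b)) {a : ℝ} (hab : b ≤ a) :
    W (a - b) * ∫ x in Ioi a, 1 / R x ≤ ∫ x in Ioi b, W (x - b) / R x := by
  have hint := integrableOn_comp_sub_div hW.measurable hWM hR
  calc W (a - b) * ∫ x in Ioi a, 1 / R x
      ≤ ∫ x in Ioi a, W (x - b) / R x := by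
        rw [← integral_const_mul]
        refine setIntegral_mono_on ((hR.mono_set (Ioi_subset_Ioi hab)).const_mul _)
          (hint.mono_set (Ioi_subset_Ioi hab)) measurableSet_Ioi fun x hx => ?_
        rw [mul_one_div]
        exact div_le_div_of_nonneg_right (hW (by linarith [mem_Ioi.1 hx]))
          (hR0 x (hab.trans_lt hx))
    _ ≤ ∫ x in Ioi b, W (x - b) / R x :=
        setIntegral_mono_set hint
          ((ae_restrict_iff' measurableSet_Ioi).2 (ae_of_all _ fun x hx =>
            div_nonneg (hW0 _) (hR0 x hx)))
          (Ioi_subset_Ioi hab).eventuallyLE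

end Kernel

theorem antitoneOn_setIntegral_Ioi {g : ℝ → ℝ} {a : ℝ} (hg0 : ∀ x, a < x → 0 ≤ g x)
    (hg : ∀ b, a < b → IntegrableOn g (Ioi b)) :
    AntitoneOn (fun b => ∫ x in Ioi b, g x) (Ioi a) := fun b hb _ _ hbc =>
  setIntegral_mono_set (hg b hb)
    ((ae_restrict_iff' measurableSet_Ioi).2 (ae_of_all _ fun x hx => hg0 x (lt_trans hb hx)))
    (Ioi_subset_Ioi hbc).eventuallyLE

theorem div_mem_Ioc_of_antitoneOn {φ : ℝ → ℝ} (hpos : ∀ b, 0 < b → 0 < φ b)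
    (hanti : AntitoneOn φ (Ioi 0)) {h b : ℝ} (hh : 1 ≤ h) (hb : 0 < b) :
    φ (h * b) / φ b ∈ Ioc 0 1 := by
  have hhb : b ≤ h * b := le_mul_of_one_le_left hb.le hh
  exact ⟨div_pos (hpos _ (hb.trans_le hhb)) (hpos b hb),
    (div_le_one (hpos b hb)).2 (hanti hb (hb.trans_le hhb) hhb)⟩

theorem frequently_eventually_lt_of_lt_limsup_liminf {ι α : Type*} {l : Filter ι} {l' : Filter α}
    [l.NeBot] [l'.NeBot] {u : ι → α → ℝ} {A B c : ℝ} (hbdd : ∀ᶠ i in l, ∀ᶠ x in l', u i x ∈ Icc A B)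
    (hc : c < limsup (fun i => liminf (u i) l') l) :
    ∃ᶠ i in l, ∀ᶠ x in l', c < u i x := by
  by_contra hne
  have hle : ∀ᶠ i in l, liminf (u i) l' ≤ c := by
    filter_upwards [not_frequently.1 hne, hbdd] with i hi hbi
    exact not_lt.1 fun hlt => hi (eventually_lt_of_lt_liminf hlt
      ⟨A, eventually_map.2 (hbi.mono fun x hx => hx.1)⟩)
  have hA : ∀ᶠ i in l, A ≤ liminf (u i) l' := hbdd.mono fun i hbi =>
    le_liminf_of_le (isCoboundedUnder_ge_of_eventually_le l' (hbi.mono fun x hx => hx.2))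
      (hbi.mono fun x hx => hx.1)
  exact not_lt.2 (limsup_le_of_le (isCoboundedUnder_le_of_eventually_le l hA) hle) hc

theorem exists_eventually_lt_div_of_limsup_liminf_eq_one {φ : ℝ → ℝ}
    (hpos : ∀ b, 0 < b → 0 < φ b) (hanti : AntitoneOn φ (Ioi 0))
    (hH1 : limsup (fun h : ℝ => liminf (fun x => φ (h * x) / φ x) atTop) (nhdsWithin 1 (Ioi 1)) = 1)
    {c : ℝ} (hc : c < 1) : ∃ h, 1 < h ∧ ∀ᶠ x in atTop, c < φ (h * x) / φ x := by
  have hbdd : ∀ᶠ h in nhdsWithin 1 (Ioi 1), ∀ᶠ x in atTop, φ (h * x) / φ x ∈ Icc 0 1 :=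
    eventually_mem_nhdsWithin.mono fun h hh => (eventually_gt_atTop 0).mono fun x hx =>
      Ioc_subset_Icc_self (div_mem_Ioc_of_antitoneOn hpos hanti (le_of_lt hh) hx)
  obtain ⟨h, hev, hh⟩ := ((frequently_eventually_lt_of_lt_limsup_liminf hbdd
    (hH1 ▸ hc)).and_eventually eventually_mem_nhdsWithin).exists
  exact ⟨h, hh, hev⟩

theorem tendsto_div_nhds_one_of_le_of_mul_le {m φ : ℝ → ℝ} {A : ℝ → ℝ → ℝ}
    (hφ : ∀ᶠ b in atTop, 0 < φ b) (hle : ∀ᶠ b in atTop, m b ≤ φ b)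
    (hA : ∀ h, 1 < h → Tendsto (A h) atTop (nhds 1)) (hA0 : ∀ h, 1 < h → ∀ᶠ b in atTop, 0 ≤ A h b)
    (hmul : ∀ h, 1 < h → ∀ᶠ b in atTop, A h b * φ (h * b) ≤ m b)
    (hratio : ∀ c < 1, ∃ h, 1 < h ∧ ∀ᶠ b in atTop, c < φ (h * b) / φ b) :
    Tendsto (fun b => m b / φ b) atTop (nhds 1) := by
  rw [tendsto_order]
  refine ⟨fun c hc => ?_, fun c hc => ?_⟩
  · obtain ⟨c', hcc', hc'⟩ := exists_between hc
    obtain ⟨h, hh, hev⟩ := hratio c' hc'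
    have hlim : Tendsto (fun b => A h b * c') atTop (nhds c') := by
      simpa using (hA h hh).mul_const c'
    filter_upwards [hlim.eventually (eventually_gt_nhds hcc'), hev, hA0 h hh, hmul h hh, hφ]
      with b hb hb' hA0b hmulb hφb
    calc c < A h b * c' := hb
      _ ≤ A h b * (φ (h * b) / φ b) := mul_le_mul_of_nonneg_left hb'.le hA0b
      _ = A h b * φ (h * b) / φ b := by ring
      _ ≤ m b / φ b := div_le_div_of_nonneg_right hmulb hφb.le
  · filter_upwards [hφ, hle] with b hφb hleb
    exact ((div_le_one hφb).2 hleb).trans_lt hc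

theorem stmt7_general (γ : ℝ) (hγ : 0 < γ) (W R : ℝ → ℝ)
    (hWmono : MonotoneOn W (Ici 0)) (hW0 : ∀ x, 0 ≤ x → 0 ≤ W x)
    (hWlim : Tendsto W atTop (nhds (1 / γ)))
    (hWneg : ∀ x, x < 0 → W x = 0)
    (hRpos : ∀ x, 0 < x → 0 < R x)
    (hRint : ∀ b, 0 < b → IntegrableOn (fun x => 1 / R x) (Ioi b))
    (m φ : ℝ → ℝ)
    (hm : ∀ b, 0 < b → m b = ∫ x in Ioi b, W (x - b) / R x)
    (hφ : ∀ b, 0 < b → φ b = (1 / γ) * ∫ x in Ioi b, 1 / R x)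
    (hH1 : Filter.limsup (fun h : ℝ => Filter.liminf (fun x => φ (h * x) / φ x) atTop)
      (nhdsWithin 1 (Ioi 1)) = 1) :
    Tendsto (fun b => m b / φ b) atTop (nhds 1) := by
  have hWmono' : Monotone W := hWmono.monotone_of_eq_on_Iio hW0 hWneg
  have hWnonneg : ∀ y, 0 ≤ W y := fun y =>
    (lt_or_ge y 0).elim (fun hy => (hWneg y hy).ge) (hW0 y)
  have hWnorm : ∀ y, ‖W y‖ ≤ 1 / γ := fun y =>
    (Real.norm_of_nonneg (hWnonneg y)).trans_le (hWmono'.ge_of_tendsto hWlim y)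
  have hR0 : ∀ b, 0 < b → ∀ x, b < x → 0 ≤ R x := fun b hb x hx => (hRpos x (hb.trans hx)).le
  have hφpos : ∀ b, 0 < b → 0 < φ b := fun b hb => by
    rw [hφ b hb]
    exact mul_pos (by positivity)
      (setIntegral_Ioi_pos (fun x hx => one_div_pos.2 (hRpos x (hb.trans hx))) (hRint b hb))
  have hφanti : AntitoneOn φ (Ioi 0) := fun a ha b hb hab => by
    rw [hφ a ha, hφ b hb]
    exact mul_le_mul_of_nonneg_left (antitoneOn_setIntegral_Ioi
      (fun x hx => (one_div_pos.2 (hRpos x hx)).le) hRint ha hb hab) (by positivity)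
  refine tendsto_div_nhds_one_of_le_of_mul_le (A := fun h b => γ * W ((h - 1) * b))
    ((eventually_gt_atTop 0).mono hφpos) ((eventually_gt_atTop 0).mono fun b hb => ?upper)
    (fun h hh => ?limit) (fun h _ => .of_forall fun b => mul_nonneg hγ.le (hWnonneg _))
    (fun h hh => (eventually_gt_atTop 0).mono fun b hb => ?lower)
    (fun c hc => exists_eventually_lt_div_of_limsup_liminf_eq_one hφpos hφanti hH1 hc)
  case upper =>
    rw [hm b hb, hφ b hb]
    exact setIntegral_comp_sub_div_le hWmono'.measurable hWnorm (hR0 b hb) (hRint b hb)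
  case limit =>
    have hW := hWlim.comp (tendsto_id.const_mul_atTop (sub_pos.2 hh))
    simpa [hγ.ne'] using hW.const_mul γ
  case lower =>
    have hhb : b ≤ h * b := le_mul_of_one_le_left hb.le (le_of_lt hh)
    rw [hφ _ (hb.trans_le hhb), mul_comm γ, mul_assoc, one_div, mul_inv_cancel_left₀ hγ.ne',
      hm b hb, show (h - 1) * b = h * b - b by ring]
    exact mul_setIntegral_le_setIntegral_comp_sub_div hWmono' hWnonneg hWnorm (hR0 b hb)
      (hRint b hb) hhb

theorem stmt7 (γ : ℝ) (hγ : 0 < γ) (W R : ℝ → ℝ)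
    (hWmono : MonotoneOn W (Ici 0)) (hW0 : ∀ x, 0 ≤ x → 0 ≤ W x)
    (hWbd : ∀ x, 0 ≤ x → W x ≤ 1 / γ)
    (hWlim : Tendsto W atTop (nhds (1 / γ)))
    (hWneg : ∀ x, x < 0 → W x = 0)
    (hRcont : ContinuousOn R (Ioi 0)) (hRpos : ∀ x, 0 < x → 0 < R x)
    (hRint : ∀ b, 0 < b → IntegrableOn (fun x => 1 / R x) (Ioi b))
    (m φ : ℝ → ℝ)
    (hm : ∀ b, 0 < b → m b = ∫ x in Ioi b, W (x - b) / R x)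
    (hφ : ∀ b, 0 < b → φ b = (1 / γ) * ∫ x in Ioi b, 1 / R x)
    (hH1 : Filter.limsup (fun h : ℝ => Filter.liminf (fun x => φ (h * x) / φ x) atTop)
      (nhdsWithin 1 (Ioi 1)) = 1) :
    Tendsto (fun b => m b / φ b) atTop (nhds 1) :=
  stmt7_general γ hγ W R hWmono hW0 hWlim hWneg hRpos hRint m φ hm hφ hH1
end

section
/- Let (τ_k)_{k≥1} be independent nonnegative random variables with finite variances, and set T_n := ∑_{k≥n} τ_k, assumed a.s. finite with m_n := E[T_n] > 0. If ∑_{n≥1} Var(T_n)/m_n² < ∞, then T_n/m_n → 1 almost surely as n → ∞. -/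
/-! Chebyshev's inequality bounds `P(|T n - m n| ≥ ε m n)` by `Var(T n) / (ε m n)²`, which is
summable by hypothesis; Borel–Cantelli then shows that almost surely `|T n / m n - 1| < ε` for all
large `n`, and intersecting over `ε = 1 / (k + 1)` gives almost sure convergence. -/

open MeasureTheory Filter ProbabilityTheory Topology

section SummableVariance

variable {Ω : Type*} [MeasurableSpace Ω] {μ : Measure Ω} [IsFiniteMeasure μ]
  {X : ℕ → Ω → ℝ} {c : ℕ → ℝ}

theorem ae_eventually_abs_sub_integral_lt_mul_of_summable_variance
    (hX : ∀ n, MemLp (X n) 2 μ) (hc : ∀ n, 0 < c n)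
    (hsum : Summable fun n => variance (X n) μ / c n ^ 2) {ε : ℝ} (hε : 0 < ε) :
    ∀ᵐ ω ∂μ, ∀ᶠ n in atTop, |X n ω - μ[X n]| < ε * c n := by
  have hsum_ε : Summable fun n => variance (X n) μ / (ε * c n) ^ 2 := by
    simpa only [mul_pow, ← div_div, div_right_comm _ (ε ^ 2)] using hsum.div_const (ε ^ 2)
  have htsum : ∑' n, μ {ω | ε * c n ≤ |X n ω - μ[X n]|} ≠ ⊤ := by
    refine ne_top_of_le_ne_top ?_ (ENNReal.tsum_le_tsum fun n =>
      meas_ge_le_variance_div_sq (hX n) (mul_pos hε (hc n)))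
    rw [← ENNReal.ofReal_tsum_of_nonneg
      (fun n => div_nonneg (variance_nonneg _ _) (sq_nonneg _)) hsum_ε]
    exact ENNReal.ofReal_ne_top
  filter_upwards [ae_eventually_notMem htsum] with ω hω
  filter_upwards [hω] with n hn
  exact not_le.mp hn

theorem ae_tendsto_sub_integral_div_of_summable_variance
    (hX : ∀ n, MemLp (X n) 2 μ) (hc : ∀ n, 0 < c n)
    (hsum : Summable fun n => variance (X n) μ / c n ^ 2) :
    ∀ᵐ ω ∂μ, Tendsto (fun n => (X n ω - μ[X n]) / c n) atTop (𝓝 0) := by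
  have hall : ∀ᵐ ω ∂μ, ∀ k : ℕ, ∀ᶠ n in atTop, |X n ω - μ[X n]| < (1 / (k + 1)) * c n :=
    ae_all_iff.mpr fun k =>
      ae_eventually_abs_sub_integral_lt_mul_of_summable_variance hX hc hsum (by positivity)
  filter_upwards [hall] with ω hω
  rw [Metric.tendsto_atTop]
  intro δ hδ
  obtain ⟨k, hk⟩ := exists_nat_one_div_lt hδ
  obtain ⟨N, hN⟩ := eventually_atTop.mp (hω k)
  refine ⟨N, fun n hn => ?_⟩
  rw [Real.dist_0_eq_abs, abs_div, abs_of_pos (hc n), div_lt_iff₀ (hc n)]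
  exact (hN n hn).trans (mul_lt_mul_of_pos_right hk (hc n))

end SummableVariance

theorem stmt11_general {Ω : Type*} [MeasureSpace Ω] [IsProbabilityMeasure (volume : Measure Ω)]
    (T : ℕ → Ω → ℝ) (m : ℕ → ℝ)
    (hTL2 : ∀ n, MemLp (T n) 2 volume)
    (hmdef : ∀ n, m n = ∫ ω, T n ω)
    (hmpos : ∀ n, 0 < m n)
    (hvar : Summable (fun n => variance (T n) volume / (m n) ^ 2)) :
    ∀ᵐ ω, Tendsto (fun n => T n ω / m n) atTop (nhds 1) := by
  filter_upwards [ae_tendsto_sub_integral_div_of_summable_variance hTL2 hmpos hvar] with ω hω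
  have hdecomp : ∀ n, T n ω / m n = 1 + (T n ω - ∫ ω, T n ω) / m n := fun n => by
    rw [← hmdef, sub_div, div_self (hmpos n).ne']
    ring
  simpa only [hdecomp, add_zero] using hω.const_add 1

theorem stmt11 {Ω : Type*} [MeasureSpace Ω] [IsProbabilityMeasure (volume : Measure Ω)]
    (τ : ℕ → Ω → ℝ) (T : ℕ → Ω → ℝ) (m : ℕ → ℝ)
    (hmeas : ∀ k, Measurable (τ k))
    (hindep : iIndepFun τ volume)
    (hnonneg : ∀ k ω, 0 ≤ τ k ω)
    (hL2 : ∀ k, MemLp (τ k) 2 volume)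
    (hT : ∀ n, ∀ᵐ ω, HasSum (fun k => τ (n + k) ω) (T n ω))
    (hTL2 : ∀ n, MemLp (T n) 2 volume)
    (hmdef : ∀ n, m n = ∫ ω, T n ω)
    (hmpos : ∀ n, 0 < m n)
    (hvar : Summable (fun n => variance (T n) volume / (m n) ^ 2)) :
    ∀ᵐ ω, Tendsto (fun n => T n ω / m n) atTop (nhds 1) :=
  stmt11_general T m hTL2 hmdef hmpos hvar
end

section
/- Let v ∈ (1/2, 1), θ > 1, and define R(x) = x^θ(2 + cos(x)/x^v) for x ≥ x₀ > 1. Then there exists C > 0 such that for every ρ > 0 and all sufficiently large z, V(z,ρ) := sup_{x ≥ z} (R(x)/R(x+ρz) − 1)₊ ≤ C ρ z^{1−v}; in particular V(z, z^{−1/2}) ≤ C z^{1/2−v} → 0 as z → ∞. -/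
open MeasureTheory Set Filter

lemma key_bound {v θ x₀ : ℝ} (hv0 : 0 < v) (hx₀ : 1 < x₀) {R : ℝ → ℝ}
    (hR : ∀ x, x₀ ≤ x → R x = x ^ θ * (2 + Real.cos x / x ^ v))
    (hθ : 0 ≤ θ) {z h : ℝ} (hz : x₀ ≤ z) (hh : 0 < h) {x : ℝ} (hx : z ≤ x) :
    max (R x / R (x + h) - 1) 0 ≤ 2 / z ^ v := by
  have hz1 : (1:ℝ) ≤ z := le_trans hx₀.le hz
  have hx1 : (1:ℝ) ≤ x := hz1.trans hx
  have hxh1 : (1:ℝ) ≤ x + h := by linarith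
  have hzpos : (0:ℝ) < z := by linarith
  have hxpos : (0:ℝ) < x := by linarith
  have hxhpos : (0:ℝ) < x + h := by linarith
  have hpow : ∀ y : ℝ, 1 ≤ y → 1 ≤ y ^ v := by
    intro y hy
    have := Real.rpow_le_rpow (by norm_num) hy hv0.le
    rwa [Real.one_rpow] at this
  have hpz : 1 ≤ z ^ v := hpow z hz1
  have hpx : 1 ≤ x ^ v := hpow x hx1
  have hpxh : 1 ≤ (x + h) ^ v := hpow _ hxh1
  have hzx : z ^ v ≤ x ^ v := Real.rpow_le_rpow hzpos.le hx hv0.le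
  have hzxh : z ^ v ≤ (x + h) ^ v := Real.rpow_le_rpow hzpos.le (by linarith) hv0.le
  rw [hR x (hz.trans hx), hR (x + h) (by linarith [hz.trans hx])]
  set a : ℝ := 2 + Real.cos x / x ^ v with ha
  set b : ℝ := 2 + Real.cos (x + h) / (x + h) ^ v with hb
  have hA : x ^ θ ≤ (x + h) ^ θ := Real.rpow_le_rpow hxpos.le (by linarith) hθ
  have hApos : (0:ℝ) < x ^ θ := Real.rpow_pos_of_pos hxpos θ
  have hBpos : (0:ℝ) < (x + h) ^ θ := Real.rpow_pos_of_pos hxhpos θ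
  have ha1 : 1 ≤ a := by
    have h1 : -1 ≤ Real.cos x / x ^ v := by
      rw [le_div_iff₀ (by linarith)]
      nlinarith [Real.neg_one_le_cos x]
    simp only [ha]; linarith
  have hb1 : 1 ≤ b := by
    have h1 : -1 ≤ Real.cos (x + h) / (x + h) ^ v := by
      rw [le_div_iff₀ (by linarith)]
      nlinarith [Real.neg_one_le_cos (x + h)]
    simp only [hb]; linarith
  have hab : a ≤ b + 2 / z ^ v := by
    have h1 : Real.cos x / x ^ v ≤ 1 / z ^ v := by
      apply div_le_div₀ (by positivity) (Real.cos_le_one x) (by linarith) hzx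
    have h2 : -(1 / z ^ v) ≤ Real.cos (x + h) / (x + h) ^ v := by
      rw [neg_le, ← neg_div]
      apply div_le_div₀ (by positivity) (by linarith [Real.neg_one_le_cos (x + h)])
        (by linarith) hzxh
    simp only [ha, hb]
    have : 2 / z ^ v = 1 / z ^ v + 1 / z ^ v := by ring
    linarith
  have hε : (0:ℝ) < 2 / z ^ v := by positivity
  apply max_le _ hε.le
  rw [sub_le_iff_le_add, div_le_iff₀ (by positivity)]
  have hmain : x ^ θ * a ≤ (x + h) ^ θ * (b + 2 / z ^ v) :=
    mul_le_mul hA hab (by linarith) hBpos.le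
  nlinarith [mul_nonneg (mul_nonneg hε.le hBpos.le) (show (0:ℝ) ≤ b - 1 by linarith)]

theorem stmt12 (v θ x₀ : ℝ) (hv1 : 1 / 2 < v) (hv2 : v < 1) (hθ : 1 < θ) (hx₀ : 1 < x₀)
    (R : ℝ → ℝ) (hR : ∀ x, x₀ ≤ x → R x = x ^ θ * (2 + Real.cos x / x ^ v))
    (V : ℝ → ℝ → ℝ)
    (hV : ∀ z ρ : ℝ, V z ρ = ⨆ x : {x : ℝ // z ≤ x}, max (R x / R (x + ρ * z) - 1) 0) :
    ∃ C > 0,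
      (∀ ρ > 0, ∀ᶠ z in atTop, V z ρ ≤ C * ρ * z ^ (1 - v)) ∧
      (∀ᶠ z in atTop, V z (z ^ (-(1 : ℝ) / 2)) ≤ C * z ^ ((1 : ℝ) / 2 - v)) ∧
      Tendsto (fun z : ℝ => C * z ^ ((1 : ℝ) / 2 - v)) atTop (nhds 0) := by
  have hv0 : 0 < v := by linarith
  have hVle : ∀ z ρ : ℝ, x₀ ≤ z → 0 < ρ → V z ρ ≤ 2 / z ^ v := by
    intro z ρ hz hρ
    rw [hV]
    haveI : Nonempty {x : ℝ // z ≤ x} := ⟨⟨z, le_rfl⟩⟩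
    apply ciSup_le
    intro ⟨x, hx⟩
    exact key_bound hv0 hx₀ hR (by linarith) hz
      (mul_pos hρ (by linarith [hx₀.le.trans hz])) hx
  refine ⟨2, by norm_num, ?_, ?_, ?_⟩
  · intro ρ hρ
    have h1v : (0:ℝ) < 1 - v := by linarith
    filter_upwards [eventually_ge_atTop x₀,
      (tendsto_rpow_atTop h1v).eventually_ge_atTop (1 / ρ)] with z hz hz2
    have hz1 : (1:ℝ) ≤ z := le_trans hx₀.le hz
    have hpz : 1 ≤ z ^ v := by
      have := Real.rpow_le_rpow (by norm_num) hz1 hv0.le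
      rwa [Real.one_rpow] at this
    have h2 : V z ρ ≤ 2 / z ^ v := hVle z ρ hz hρ
    have h3 : 2 / z ^ v ≤ 2 := by
      rw [div_le_iff₀ (by linarith)]; linarith
    have h4 : 1 ≤ ρ * z ^ (1 - v) := by
      have : 1 / ρ ≤ z ^ (1 - v) := hz2
      calc (1:ℝ) = ρ * (1/ρ) := by field_simp
        _ ≤ ρ * z ^ (1 - v) := mul_le_mul_of_nonneg_left this hρ.le
    calc V z ρ ≤ 2 := h2.trans h3
      _ ≤ 2 * ρ * z ^ (1 - v) := by nlinarith
  · filter_upwards [eventually_ge_atTop x₀] with z hz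
    have hz1 : (1:ℝ) ≤ z := le_trans hx₀.le hz
    have hzpos : (0:ℝ) < z := by linarith
    have hρ : (0:ℝ) < z ^ (-(1:ℝ)/2) := Real.rpow_pos_of_pos hzpos _
    have h2 : V z (z ^ (-(1:ℝ)/2)) ≤ 2 / z ^ v := hVle z _ hz hρ
    have h3 : 2 / z ^ v ≤ 2 * z ^ ((1:ℝ)/2 - v) := by
      rw [div_le_iff₀ (by positivity)]
      have : z ^ ((1:ℝ)/2 - v) * z ^ v = z ^ ((1:ℝ)/2) := by
        rw [← Real.rpow_add hzpos]; ring_nf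
      have h4 : 1 ≤ z ^ ((1:ℝ)/2) := by
        have := Real.rpow_le_rpow (by norm_num) hz1 (by norm_num : (0:ℝ) ≤ 1/2)
        rwa [Real.one_rpow] at this
      nlinarith [Real.rpow_pos_of_pos hzpos ((1:ℝ)/2 - v)]
    exact h2.trans h3
  · have : Tendsto (fun z : ℝ => z ^ ((1:ℝ)/2 - v)) atTop (nhds 0) := by
      have h := tendsto_rpow_neg_atTop (by linarith : (0:ℝ) < v - 1/2)
      convert h using 2 with z
      ring_nf
    have := this.const_mul (2:ℝ)
    simpa using this
end

section
/- Let φ : (0,∞) → (0,∞) be continuous, strictly decreasing with φ(x) → 0 as x → ∞, and suppose φ(x)/φ(cx) → ∞ as x → ∞ for every c > 1. Then the inverse function φ^{−1} is slowly varying at 0: φ^{−1}(λt)/φ^{−1}(t) → 1 as t → 0+ for every λ > 0. -/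
open MeasureTheory Set Filter

theorem stmt14 (φ ψ : ℝ → ℝ)
    (hcont : ContinuousOn φ (Ioi 0)) (hanti : StrictAntiOn φ (Ioi 0))
    (hpos : ∀ x, 0 < x → 0 < φ x)
    (hlim : Tendsto φ atTop (nhds 0))
    (hH : ∀ c : ℝ, 1 < c → Tendsto (fun x => φ x / φ (c * x)) atTop atTop)
    (hψ1 : ∀ x, 0 < x → ψ (φ x) = x)
    (hψ2 : ∀ᶠ t in nhdsWithin 0 (Ioi 0), 0 < ψ t ∧ φ (ψ t) = t) :
    ∀ l : ℝ, 0 < l →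
      Tendsto (fun t => ψ (l * t) / ψ t) (nhdsWithin 0 (Ioi 0)) (nhds 1) := by
  -- multiplication by a positive constant preserves nhdsWithin 0 (Ioi 0)
  have hmul : ∀ l : ℝ, 0 < l → Tendsto (fun t : ℝ => l * t)
      (nhdsWithin 0 (Ioi 0)) (nhdsWithin 0 (Ioi 0)) := by
    intro l hl
    apply tendsto_nhdsWithin_of_tendsto_nhds_of_eventually_within
    · have : Tendsto (fun t : ℝ => l * t) (nhds 0) (nhds (l * 0)) :=
        (tendsto_id.const_mul l)
      simpa using this.mono_left nhdsWithin_le_nhds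
    · filter_upwards [self_mem_nhdsWithin] with t ht
      exact mul_pos hl ht
  -- key estimate
  have key : ∀ l : ℝ, 0 < l → ∀ c : ℝ, 1 < c →
      ∀ᶠ t in nhdsWithin 0 (Ioi 0), ψ (l * t) < c * ψ t := by
    intro l hl c hc
    obtain ⟨X₀, hX₀⟩ := eventually_atTop.mp ((hH c hc).eventually_gt_atTop (1 / l))
    set X : ℝ := max X₀ 1 with hX
    have hXpos : 0 < X := lt_of_lt_of_le one_pos (le_max_right _ _)
    have hφcx : ∀ x : ℝ, X ≤ x → φ (c * x) < l * φ x := by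
      intro x hx
      have hx0 : 0 < x := lt_of_lt_of_le hXpos hx
      have hcx0 : 0 < c * x := mul_pos (lt_trans one_pos hc) hx0
      have h1 : 1 / l < φ x / φ (c * x) := hX₀ x (le_trans (le_max_left _ _) hx)
      have h2 : 0 < φ (c * x) := hpos _ hcx0
      rw [div_lt_div_iff₀ hl h2] at h1
      linarith [h1]
    have htlt : ∀ᶠ t in nhdsWithin 0 (Ioi 0), t < φ X :=
      (eventually_nhdsWithin_of_eventually_nhds (gt_mem_nhds (hpos X hXpos)))
    filter_upwards [hψ2, (hmul l hl).eventually hψ2, htlt, self_mem_nhdsWithin]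
      with t ht hlt htX ht0
    obtain ⟨hψt, hφψt⟩ := ht
    obtain ⟨hψlt, hφψlt⟩ := hlt
    -- ψ t > X
    have hψtX : X < ψ t := by
      by_contra h
      push_neg at h
      have := hanti.antitoneOn (mem_Ioi.mpr hψt) (mem_Ioi.mpr hXpos) h
      rw [hφψt] at this
      linarith
    -- φ (c * ψ t) < l * t
    have h3 : φ (c * ψ t) < l * t := by
      have := hφcx (ψ t) hψtX.le
      rw [hφψt] at this
      exact this
    -- conclude
    by_contra h
    push_neg at h
    have hcψt : 0 < c * ψ t := mul_pos (lt_trans one_pos hc) hψt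
    have := hanti.antitoneOn (mem_Ioi.mpr hcψt) (mem_Ioi.mpr hψlt) h
    rw [hφψlt] at this
    linarith
  intro l hl
  rw [Metric.tendsto_nhds]
  intro ε hε
  have hc : (1 : ℝ) < 1 + ε / 2 := by linarith
  have hlow : ∀ᶠ t in nhdsWithin 0 (Ioi 0), ψ t < (1 + ε / 2) * ψ (l * t) := by
    have := (hmul l hl).eventually (key l⁻¹ (by positivity) (1 + ε / 2) hc)
    filter_upwards [this] with t ht
    rwa [inv_mul_cancel_left₀ hl.ne'] at ht
  filter_upwards [key l hl (1 + ε / 2) hc, hlow, hψ2, (hmul l hl).eventually hψ2]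
    with t hup hdn ht hlt
  obtain ⟨hψt, -⟩ := ht
  obtain ⟨hψlt, -⟩ := hlt
  rw [Real.dist_eq, abs_lt]
  have h1 : ψ (l * t) / ψ t < 1 + ε := by
    rw [div_lt_iff₀ hψt]; nlinarith
  have h2 : 1 - ε < ψ (l * t) / ψ t := by
    rw [lt_div_iff₀ hψt]; nlinarith
  constructor <;> linarith
end
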